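/- Let A be a Banach algebra and I a closed two-sided ideal of A such that the closed linear span of I² equals I. If the quotient Banach algebra A/I is approximately cyclic amenable and I is cyclic amenable, then A is approximately cyclic amenable. -/

import Mathlib

/-!
A cyclic derivation `D : A → A*` restricts to a cyclic derivation of `I`, which is inner,
implemented by some `f ∈ I*`. Subtracting the inner derivation of a Hahn–Banach extension `F`
of `f` leaves a cyclic derivation `D₁` vanishing on `I × I`. The derivation identity
`D₁ (x y) c = D₁ x (y c) + D₁ y (c x)` and density of `span I²` in `I` give `D₁ = 0` on `I`, and
cyclicity then gives `D₁ a = 0` on `I`; so `D₁` descends to a cyclic derivation of `A/I`, bounded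
thanks to the quotient norm. An approximating net for it, pulled back to `A` and shifted by `F`,
approximates `D`.
-/

open Filter Topology

noncomputable section

universe u v

variable {A : Type u} [NonUnitalNormedRing A] [NormedSpace ℂ A]
  [IsScalarTower ℂ A A] [SMulCommClass ℂ A A]

/-- The left module action of `A` on its dual `A*`: `(a · f) b = f (b * a)`. -/
def lAct (a : A) (f : A →L[ℂ] ℂ) : A →L[ℂ] ℂ :=
  f.comp ((ContinuousLinearMap.mul ℂ A).flip a)

/-- The right module action of `A` on its dual `A*`: `(f · a) b = f (a * b)`. -/
def rAct (f : A →L[ℂ] ℂ) (a : A) : A →L[ℂ] ℂ :=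
  f.comp (ContinuousLinearMap.mul ℂ A a)

/-- A bounded linear `D : A → A*` is a derivation if `D (a * b) = D a · b + a · D b`. -/
def IsDerivation (D : A →L[ℂ] (A →L[ℂ] ℂ)) : Prop :=
  ∀ a b : A, D (a * b) = rAct (D a) b + lAct a (D b)

/-- A derivation `D : A → A*` is cyclic if `⟨D a, b⟩ + ⟨D b, a⟩ = 0` for all `a, b`. -/
def IsCyclicDeriv (D : A →L[ℂ] (A →L[ℂ] ℂ)) : Prop :=
  ∀ a b : A, D a b + D b a = 0

/-- `D : A → A*` is approximately inner if there is a net `(f i)` in `A*` with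
`D a = lim_i (a · f i - f i · a)` in norm, for every `a ∈ A`. -/
def IsApproxInner {A : Type u} [NonUnitalNormedRing A] [NormedSpace ℂ A]
    [IsScalarTower ℂ A A] [SMulCommClass ℂ A A] (D : A →L[ℂ] (A →L[ℂ] ℂ)) : Prop :=
  ∃ (ι : Type u) (l : Filter ι) (f : ι → (A →L[ℂ] ℂ)), l.NeBot ∧
    ∀ a : A, Tendsto (fun i => lAct a (f i) - rAct (f i) a) l (𝓝 (D a))

/-- `D : A → A*` is inner if `D a = a · f - f · a` for some fixed `f ∈ A*`. -/
def IsInner (D : A →L[ℂ] (A →L[ℂ] ℂ)) : Prop :=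
  ∃ f : A →L[ℂ] ℂ, ∀ a : A, D a = lAct a f - rAct f a

/-- A Banach algebra is approximately cyclic amenable if every cyclic bounded
derivation `D : A → A*` is approximately inner. -/
def ApproxCyclicAmenable (A : Type u) [NonUnitalNormedRing A] [NormedSpace ℂ A]
    [IsScalarTower ℂ A A] [SMulCommClass ℂ A A] : Prop :=
  ∀ D : A →L[ℂ] (A →L[ℂ] ℂ), IsDerivation D → IsCyclicDeriv D → IsApproxInner D

/-- A Banach algebra is cyclic amenable if every cyclic bounded derivation
`D : A → A*` is inner. -/
def CyclicAmenable (A : Type u) [NonUnitalNormedRing A] [NormedSpace ℂ A]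
    [IsScalarTower ℂ A A] [SMulCommClass ℂ A A] : Prop :=
  ∀ D : A →L[ℂ] (A →L[ℂ] ℂ), IsDerivation D → IsCyclicDeriv D → IsInner D

instance nonUnitalSubalgebraNormedSpaceComplex {B : Type u} [NonUnitalNormedRing B]
    [NormedSpace ℂ B] [IsScalarTower ℂ B B] [SMulCommClass ℂ B B]
    (S : NonUnitalSubalgebra ℂ B) : NormedSpace ℂ S :=
  SubmoduleClass.toNormedSpace (R := ℂ) S

namespace ContinuousLinearMap

theorem exists_comp_eq_of_quotientNorm
    {𝕜 X Y E : Type*} [NontriviallyNormedField 𝕜] [SeminormedAddCommGroup X] [NormedSpace 𝕜 X]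
    [SeminormedAddCommGroup Y] [NormedSpace 𝕜 Y] [SeminormedAddCommGroup E] [NormedSpace 𝕜 E]
    (π : X →L[𝕜] Y) (hsurj : Function.Surjective π)
    (hnorm : ∀ y : Y, ‖y‖ = sInf (norm '' (π ⁻¹' {y})))
    (φ : X →L[𝕜] E) (hφ : ∀ x, π x = 0 → φ x = 0) :
    ∃ ψ : Y →L[𝕜] E, ψ.comp π = φ := by
  have hker : LinearMap.ker (π : X →ₗ[𝕜] Y) ≤ LinearMap.ker (φ : X →ₗ[𝕜] E) :=
    fun x hx => hφ x hx
  let ψ : Y →ₗ[𝕜] E := ((LinearMap.ker (π : X →ₗ[𝕜] Y)).liftQ φ hker).comp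
    ((π : X →ₗ[𝕜] Y).quotKerEquivOfSurjective hsurj).symm.toLinearMap
  have hψ (x : X) : ψ (π x) = φ x := by
    have h := (π : X →ₗ[𝕜] Y).quotKerEquivOfSurjective_symm_apply hsurj x
    simp_all [ψ]
  refine ⟨ψ.mkContinuous ‖φ‖ fun y => ?_, ext hψ⟩
  obtain ⟨x₀, rfl⟩ := hsurj y
  rw [hnorm, ← smul_eq_mul, ← Real.sInf_smul_of_nonneg (norm_nonneg φ)]
  refine le_csInf ((Set.nonempty_of_mem rfl : (π ⁻¹' {π x₀}).Nonempty).image norm).smul_set ?_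
  rintro _ ⟨_, ⟨x, hx, rfl⟩, rfl⟩
  rw [Set.mem_preimage, Set.mem_singleton_iff] at hx
  rw [← hx, hψ]
  exact φ.le_opNorm x

end ContinuousLinearMap

@[simp]
lemma lAct_apply (a : A) (f : A →L[ℂ] ℂ) (b : A) : lAct a f b = f (b * a) := rfl

@[simp]
lemma rAct_apply (f : A →L[ℂ] ℂ) (a b : A) : rAct f a b = f (a * b) := rfl

def innerDeriv (F : A →L[ℂ] ℂ) : A →L[ℂ] (A →L[ℂ] ℂ) :=
  (ContinuousLinearMap.compL ℂ A A ℂ F).comp (ContinuousLinearMap.mul ℂ A).flip -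
    (ContinuousLinearMap.compL ℂ A A ℂ F).comp (ContinuousLinearMap.mul ℂ A)

lemma innerDeriv_apply (F : A →L[ℂ] ℂ) (a : A) : innerDeriv F a = lAct a F - rAct F a := rfl

lemma isDerivation_innerDeriv (F : A →L[ℂ] ℂ) : IsDerivation (innerDeriv F) := by
  intro a b
  ext c
  simp only [innerDeriv_apply, add_apply, sub_apply, lAct_apply, rAct_apply, mul_assoc]
  ring

lemma isCyclicDeriv_innerDeriv (F : A →L[ℂ] ℂ) : IsCyclicDeriv (innerDeriv F) := by
  intro a b
  simp only [innerDeriv_apply, sub_apply, lAct_apply, rAct_apply]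
  ring

lemma IsDerivation.sub {D D' : A →L[ℂ] (A →L[ℂ] ℂ)} (hD : IsDerivation D)
    (hD' : IsDerivation D') : IsDerivation (D - D') := by
  intro a b
  ext c
  have h := congr($(hD a b) c)
  have h' := congr($(hD' a b) c)
  simp only [add_apply, sub_apply, lAct_apply, rAct_apply] at h h' ⊢
  rw [h, h']
  ring

lemma IsCyclicDeriv.sub {X : Type*} [NonUnitalNormedRing X] [NormedSpace ℂ X]
    {D D' : X →L[ℂ] (X →L[ℂ] ℂ)} (hD : IsCyclicDeriv D) (hD' : IsCyclicDeriv D') :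
    IsCyclicDeriv (D - D') := by
  intro a b
  simp only [sub_apply]
  linear_combination hD a b - hD' a b

lemma isApproxInner_of_tendsto {ι : Type*} {D : A →L[ℂ] (A →L[ℂ] ℂ)} (l : Filter ι) [l.NeBot]
    (f : ι → A →L[ℂ] ℂ) (hf : ∀ a, Tendsto (fun i => lAct a (f i) - rAct (f i) a) l (𝓝 (D a))) :
    IsApproxInner D :=
  ⟨_, l.map f, id, inferInstance, fun a => tendsto_map'_iff.2 (hf a)⟩

lemma IsApproxInner.innerDeriv_add {D : A →L[ℂ] (A →L[ℂ] ℂ)} (hD : IsApproxInner D)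
    (F : A →L[ℂ] ℂ) : IsApproxInner (innerDeriv F + D) := by
  obtain ⟨ι, l, f, hl, hf⟩ := hD
  refine isApproxInner_of_tendsto l (fun i => F + f i) fun a => ?_
  have h (i : ι) : lAct a (F + f i) - rAct (F + f i) a
      = innerDeriv F a + (lAct a (f i) - rAct (f i) a) := by
    ext b
    simp only [innerDeriv_apply, add_apply, sub_apply, lAct_apply, rAct_apply]
    ring
  simp only [add_apply, h]
  exact (hf a).const_add _

def pullback {X Y : Type*} [SeminormedAddCommGroup X] [NormedSpace ℂ X]
    [SeminormedAddCommGroup Y] [NormedSpace ℂ Y]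
    (π : X →L[ℂ] Y) (D : Y →L[ℂ] (Y →L[ℂ] ℂ)) : X →L[ℂ] (X →L[ℂ] ℂ) :=
  ((ContinuousLinearMap.compL ℂ X Y ℂ).flip π).comp (D.comp π)

@[simp]
lemma pullback_apply {X Y : Type*} [SeminormedAddCommGroup X] [NormedSpace ℂ X]
    [SeminormedAddCommGroup Y] [NormedSpace ℂ Y]
    (π : X →L[ℂ] Y) (D : Y →L[ℂ] (Y →L[ℂ] ℂ)) (a b : X) :
    pullback π D a b = D (π a) (π b) := rfl

section Pullback

variable {B : Type v} [NonUnitalNormedRing B] [NormedSpace ℂ B]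
  [IsScalarTower ℂ B B] [SMulCommClass ℂ B B] {π : A →L[ℂ] B} {D : B →L[ℂ] (B →L[ℂ] ℂ)}

lemma IsDerivation.pullback (hmul : ∀ x y, π (x * y) = π x * π y) (hD : IsDerivation D) :
    IsDerivation (_root_.pullback π D) := by
  intro a b
  ext c
  simpa [hmul] using congr($(hD (π a) (π b)) (π c))

lemma IsDerivation.of_pullback (hmul : ∀ x y, π (x * y) = π x * π y)
    (hsurj : Function.Surjective π) (hD : IsDerivation (_root_.pullback π D)) :
    IsDerivation D := by
  intro p q
  obtain ⟨a, rfl⟩ := hsurj p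
  obtain ⟨b, rfl⟩ := hsurj q
  ext s
  obtain ⟨c, rfl⟩ := hsurj s
  simpa [hmul] using congr($(hD a b) c)

lemma IsApproxInner.pullback (hmul : ∀ x y, π (x * y) = π x * π y) (hD : IsApproxInner D) :
    IsApproxInner (_root_.pullback π D) := by
  obtain ⟨ι, l, f, hl, hf⟩ := hD
  let precomp := (ContinuousLinearMap.compL ℂ A B ℂ).flip π
  refine isApproxInner_of_tendsto l (fun i => precomp (f i)) fun a => ?_
  have h (i : ι) : lAct a (precomp (f i)) - rAct (precomp (f i)) a
      = precomp (lAct (π a) (f i) - rAct (f i) (π a)) := by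
    ext b
    simp [precomp, hmul]
  simp only [h]
  exact (precomp.continuous.tendsto _).comp (hf (π a))

end Pullback

lemma IsCyclicDeriv.pullback {X Y : Type*} [NonUnitalNormedRing X] [NormedSpace ℂ X]
    [NonUnitalNormedRing Y] [NormedSpace ℂ Y] (π : X →L[ℂ] Y) {D : Y →L[ℂ] (Y →L[ℂ] ℂ)}
    (hD : IsCyclicDeriv D) : IsCyclicDeriv (_root_.pullback π D) :=
  fun a b => hD (π a) (π b)

lemma IsCyclicDeriv.of_pullback {X Y : Type*} [NonUnitalNormedRing X] [NormedSpace ℂ X]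
    [NonUnitalNormedRing Y] [NormedSpace ℂ Y] {π : X →L[ℂ] Y} (hsurj : Function.Surjective π)
    {D : Y →L[ℂ] (Y →L[ℂ] ℂ)} (hD : IsCyclicDeriv (_root_.pullback π D)) : IsCyclicDeriv D := by
  intro p q
  obtain ⟨a, rfl⟩ := hsurj p
  obtain ⟨b, rfl⟩ := hsurj q
  exact hD a b

lemma exists_pullback_eq {X Y : Type*} [SeminormedAddCommGroup X] [NormedSpace ℂ X]
    [SeminormedAddCommGroup Y] [NormedSpace ℂ Y] (π : X →L[ℂ] Y) (hsurj : Function.Surjective π)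
    (hnorm : ∀ y : Y, ‖y‖ = sInf (norm '' (π ⁻¹' {y}))) (D : X →L[ℂ] (X →L[ℂ] ℂ))
    (hleft : ∀ x, π x = 0 → D x = 0) (hright : ∀ a x, π x = 0 → D a x = 0) :
    ∃ D' : Y →L[ℂ] (Y →L[ℂ] ℂ), pullback π D' = D := by
  obtain ⟨G, hG⟩ := π.exists_comp_eq_of_quotientNorm hsurj hnorm D.flip
    fun x hx => ContinuousLinearMap.ext fun a => hright a x hx
  obtain ⟨D', hD'⟩ := π.exists_comp_eq_of_quotientNorm hsurj hnorm G.flip fun a ha => by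
    ext y
    obtain ⟨x, rfl⟩ := hsurj y
    simpa using congr($hG x a).trans congr($(hleft a ha) x)
  refine ⟨D', ContinuousLinearMap.ext fun a => ContinuousLinearMap.ext fun b => ?_⟩
  simpa using congr($hD' a (π b)).trans congr($hG b a)

lemma IsDerivation.eq_zero_of_mem_ideal {D : A →L[ℂ] (A →L[ℂ] ℂ)} (hD : IsDerivation D)
    {I : NonUnitalSubalgebra ℂ A}
    (hr : ∀ (a : A), ∀ x ∈ I, x * a ∈ I) (hl : ∀ (a : A), ∀ x ∈ I, a * x ∈ I)
    (hI2 : I.toSubmodule ≤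
      (Submodule.span ℂ {z : A | ∃ x ∈ I, ∃ y ∈ I, z = x * y}).topologicalClosure)
    (hDI : ∀ x ∈ I, ∀ y ∈ I, D x y = 0) {x : A} (hx : x ∈ I) : D x = 0 := by
  suffices Submodule.span ℂ {z : A | ∃ x ∈ I, ∃ y ∈ I, z = x * y} ≤
      LinearMap.ker (D : A →ₗ[ℂ] (A →L[ℂ] ℂ)) from
    Submodule.topologicalClosure_minimal _ this D.isClosed_ker (hI2 hx)
  rw [Submodule.span_le]
  rintro _ ⟨x, hx, y, hy, rfl⟩
  ext c
  simp [hD x y, hDI x hx _ (hr c y hy), hDI y hy _ (hl c x hx)]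

/-- The quotient `A/I` is represented by a Banach algebra `Q` together with a surjective
continuous multiplicative linear map `π : A → Q` with kernel `I` and the quotient norm. -/
theorem approxCyclicAmenable_of_quotient_and_ideal_general
    {A : Type u} {Q : Type v} [NonUnitalNormedRing A] [NormedSpace ℂ A]
    [IsScalarTower ℂ A A] [SMulCommClass ℂ A A]
    [NonUnitalNormedRing Q] [NormedSpace ℂ Q]
    [IsScalarTower ℂ Q Q] [SMulCommClass ℂ Q Q]
    (I : NonUnitalSubalgebra ℂ A)
    (hr : ∀ (a : A), ∀ x ∈ I, x * a ∈ I) (hl : ∀ (a : A), ∀ x ∈ I, a * x ∈ I)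
    (hI2 : (Submodule.span ℂ {z : A | ∃ x ∈ I, ∃ y ∈ I, z = x * y}).topologicalClosure
      = I.toSubmodule)
    (π : A →L[ℂ] Q) (hmul : ∀ x y : A, π (x * y) = π x * π y)
    (hsurj : Function.Surjective π) (hker : ∀ a : A, π a = 0 ↔ a ∈ I)
    (hnorm : ∀ q : Q, ‖q‖ = sInf (norm '' (π ⁻¹' {q})))
    (hQ : ApproxCyclicAmenable Q) (hI : CyclicAmenable ↥I) :
    ApproxCyclicAmenable A := by
  intro D hD hcyc
  let ι : I →L[ℂ] A := I.toSubmodule.subtypeL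
  obtain ⟨f, hf⟩ := hI (pullback ι D) (hD.pullback fun _ _ => rfl) (hcyc.pullback ι)
  obtain ⟨F, hF, -⟩ := exists_extension_norm_eq I.toSubmodule f
  set D₁ := D - innerDeriv F with hD₁_def
  have hD₁ : IsDerivation D₁ := hD.sub (isDerivation_innerDeriv F)
  have hcyc₁ : IsCyclicDeriv D₁ := hcyc.sub (isCyclicDeriv_innerDeriv F)
  -- on `I`, `D` is the inner derivation of `f`, which `F` extends
  have hD₁_I : ∀ x ∈ I, ∀ y ∈ I, D₁ x y = 0 := by
    intro x hx y hy
    have h := congr($(hf ⟨x, hx⟩) ⟨y, hy⟩)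
    simp only [pullback_apply, sub_apply, lAct_apply, rAct_apply] at h
    simp only [hD₁_def, innerDeriv_apply, sub_apply, lAct_apply, rAct_apply]
    rw [hF ⟨y * x, I.mul_mem hy hx⟩, hF ⟨x * y, I.mul_mem hx hy⟩]
    exact sub_eq_zero_of_eq h
  have hleft (x : A) (hx : π x = 0) : D₁ x = 0 :=
    hD₁.eq_zero_of_mem_ideal hr hl hI2.ge hD₁_I ((hker x).1 hx)
  have hright (a x : A) (hx : π x = 0) : D₁ a x = 0 := by
    simpa [hleft x hx] using hcyc₁ a x
  obtain ⟨D₂, hD₂⟩ := exists_pullback_eq π hsurj hnorm D₁ hleft hright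
  have hD₂der : IsDerivation D₂ := .of_pullback hmul hsurj (hD₂ ▸ hD₁)
  have hD₂cyc : IsCyclicDeriv D₂ := .of_pullback hsurj (hD₂ ▸ hcyc₁)
  have hD_eq : D = innerDeriv F + pullback π D₂ := by
    rw [hD₂, hD₁_def]
    abel
  rw [hD_eq]
  exact ((hQ D₂ hD₂der hD₂cyc).pullback hmul).innerDeriv_add F

/-- Let `I` be a closed two-sided ideal of a Banach algebra `A` such that
the closed linear span of `I² = {x * y : x, y ∈ I}` is `I`.  If the quotient Banach algebra
`A/I` is approximately cyclic amenable and `I` is cyclic amenable, then `A` is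
approximately cyclic amenable.  (The quotient is represented by a Banach algebra `Q`
together with a surjective continuous multiplicative linear map `π : A → Q` with kernel `I`
and the quotient norm.) -/
theorem approxCyclicAmenable_of_quotient_and_ideal
    {A : Type u} {Q : Type v} [NonUnitalNormedRing A] [NormedSpace ℂ A]
    [IsScalarTower ℂ A A] [SMulCommClass ℂ A A] [CompleteSpace A]
    [NonUnitalNormedRing Q] [NormedSpace ℂ Q]
    [IsScalarTower ℂ Q Q] [SMulCommClass ℂ Q Q] [CompleteSpace Q]
    (I : NonUnitalSubalgebra ℂ A) (hclosed : IsClosed (I : Set A))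
    (hr : ∀ (a : A), ∀ x ∈ I, x * a ∈ I) (hl : ∀ (a : A), ∀ x ∈ I, a * x ∈ I)
    (hI2 : (Submodule.span ℂ {z : A | ∃ x ∈ I, ∃ y ∈ I, z = x * y}).topologicalClosure
      = I.toSubmodule)
    (π : A →L[ℂ] Q) (hmul : ∀ x y : A, π (x * y) = π x * π y)
    (hsurj : Function.Surjective π) (hker : ∀ a : A, π a = 0 ↔ a ∈ I)
    (hnorm : ∀ q : Q, ‖q‖ = sInf (norm '' (π ⁻¹' {q})))
    (hQ : ApproxCyclicAmenable Q) (hI : CyclicAmenable ↥I) :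
    ApproxCyclicAmenable A :=
  approxCyclicAmenable_of_quotient_and_ideal_general I hr hl hI2 π hmul hsurj hker hnorm hQ hI
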